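/- arXiv:1807.07932 — 2 statements merged into one kernel-verified Lean document; each statement's English description precedes it below -/
import Mathlib

section
/- If Z is Sibuya(α) with α ∈ (0,1), then P(Z = k) ~ (α/Γ(1-α)) k^{-1-α} as k → ∞, i.e., the ratio P(Z=k)/(α k^{-1-α}/Γ(1-α)) tends to 1. -/
open Filter

/-- Generalized binomial coefficient `binom(x, k) = x(x-1)⋯(x-k+1)/k!` for real `x`. -/
noncomputable def gbinom (x : ℝ) (k : ℕ) : ℝ :=
  (∏ i ∈ Finset.range k, (x - i)) / (Nat.factorial k)

/-- Sibuya(α) probability mass function. -/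
noncomputable def sibuya (α : ℝ) (k : ℕ) : ℝ :=
  if k = 0 then 0 else (-1 : ℝ) ^ (k - 1) * gbinom α k

lemma prod_shift (α : ℝ) (n : ℕ) :
    ∏ i ∈ Finset.range (n + 1), (α - i) =
      α * ((-1 : ℝ) ^ n * ∏ j ∈ Finset.range n, (1 - α + j)) := by
  rw [Finset.prod_range_succ']
  have : ∀ i ∈ Finset.range n, (α - (↑(i + 1) : ℝ)) = (-1) * (1 - α + i) := by
    intro i _; push_cast; ring
  rw [Finset.prod_congr rfl this, Finset.prod_mul_distrib, Finset.prod_const,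
    Finset.card_range]
  push_cast
  ring

lemma sibuya_succ (α : ℝ) (n : ℕ) :
    sibuya α (n + 1) = α * (∏ j ∈ Finset.range n, (1 - α + j)) / (n + 1).factorial := by
  have hne : (-1 : ℝ) ^ n * (-1 : ℝ) ^ n = 1 := by
    rw [← pow_add]
    exact Even.neg_one_pow ⟨n, rfl⟩
  simp only [sibuya, gbinom, Nat.add_sub_cancel, if_neg (Nat.succ_ne_zero n), prod_shift]
  field_simp
  ring_nf
  rw [pow_mul, sq, hne, mul_one]

/-- If `Z` is Sibuya(α) with `α ∈ (0,1)`, then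
`P(Z = k) ~ (α/Γ(1-α)) k^{-1-α}` as `k → ∞`: the ratio of the pmf to
`α k^{-1-α} / Γ(1-α)` tends to `1`. -/
theorem sibuya_pmf_asymptotics (α : ℝ) (hα : α ∈ Set.Ioo (0 : ℝ) 1) :
    Tendsto (fun k : ℕ =>
        sibuya α k / (α / Real.Gamma (1 - α) * (k : ℝ) ^ (-1 - α)))
      atTop (nhds 1) := by
  obtain ⟨hα0, hα1⟩ := hα
  have h1α : (0 : ℝ) < 1 - α := by linarith
  have hΓ : 0 < Real.Gamma (1 - α) := Real.Gamma_pos_of_pos h1α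
  rw [← tendsto_add_atTop_iff_nat 1]
  -- the auxiliary sequence
  set g : ℕ → ℝ := fun n =>
    Real.Gamma (1 - α) / Real.GammaSeq (1 - α) n *
      (((n : ℝ) / (n + 1)) ^ (1 - α) * (((n : ℝ) + 1) / (1 - α + n))) with hg
  have key : ∀ n : ℕ, 1 ≤ n →
      sibuya α (n + 1) / (α / Real.Gamma (1 - α) * ((n + 1 : ℕ) : ℝ) ^ (-1 - α)) = g n := by
    intro n hn
    have hN : (0 : ℝ) < n := by exact_mod_cast hn
    set N : ℝ := (n : ℝ) with hNdef
    have hP : (0 : ℝ) < ∏ j ∈ Finset.range n, (1 - α + j) := by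
      apply Finset.prod_pos
      intro j _
      positivity
    set P : ℝ := ∏ j ∈ Finset.range n, (1 - α + j) with hPdef
    have hQ : ∏ j ∈ Finset.range (n + 1), (1 - α + (j : ℝ)) = P * (1 - α + N) := by
      rw [Finset.prod_range_succ]
    have hGS : Real.GammaSeq (1 - α) n = N ^ (1 - α) * (n.factorial : ℝ) / (P * (1 - α + N)) := by
      rw [Real.GammaSeq, hQ]
    set a : ℝ := (N + 1) ^ α with hadef
    set b : ℝ := (N + 1) ^ (1 - α) with hbdef
    set c : ℝ := N ^ (1 - α) with hcdef
    have hNpos : (0 : ℝ) < N + 1 := by linarith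
    have ha : 0 < a := Real.rpow_pos_of_pos hNpos _
    have hb : 0 < b := Real.rpow_pos_of_pos hNpos _
    have hc : 0 < c := Real.rpow_pos_of_pos hN _
    have hab : a * b = N + 1 := by
      rw [hadef, hbdef, ← Real.rpow_add hNpos]
      norm_num
    have hneg : ((n + 1 : ℕ) : ℝ) ^ (-1 - α : ℝ) = (b * a ^ 2)⁻¹ := by
      push_cast
      rw [hbdef, hadef, ← Real.rpow_natCast ((N+1)^(α:ℝ)) 2, ← Real.rpow_mul hNpos.le,
        ← Real.rpow_add hNpos, ← Real.rpow_neg hNpos.le, ← hNdef]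
      congr 1
      ring
    have hdiv : ((N : ℝ) / (N + 1)) ^ (1 - α : ℝ) = c / b := by
      rw [hcdef, hbdef, Real.div_rpow hN.le hNpos.le]
    have hfac : ((n + 1).factorial : ℝ) = (N + 1) * (n.factorial : ℝ) := by
      rw [Nat.factorial_succ]; push_cast; ring
    rw [sibuya_succ, hneg, hg]
    simp only
    rw [hGS, hdiv, hfac, ← hab]
    have h1 : (1 - α + N) ≠ 0 := by positivity
    have hf : (n.factorial : ℝ) ≠ 0 := by positivity
    field_simp
    ring
  have hev : (fun n : ℕ =>
      sibuya α (n + 1) / (α / Real.Gamma (1 - α) * ((n + 1 : ℕ) : ℝ) ^ (-1 - α))) =ᶠ[atTop] g :=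
    eventually_atTop.2 ⟨1, key⟩
  have hA : Tendsto (fun n : ℕ => Real.Gamma (1 - α) / Real.GammaSeq (1 - α) n) atTop (nhds 1) := by
    have h2 := (tendsto_const_nhds (x := Real.Gamma (1 - α)) (f := atTop (α := ℕ))).div
      (Real.GammaSeq_tendsto_Gamma (1 - α)) hΓ.ne'
    have h3 : Tendsto (fun n : ℕ => Real.Gamma (1 - α) / Real.GammaSeq (1 - α) n) atTop
        (nhds (Real.Gamma (1 - α) / Real.Gamma (1 - α))) := h2.congr fun n => rfl
    rw [div_self hΓ.ne'] at h3
    exact h3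
  have hB : Tendsto (fun n : ℕ => ((n : ℝ) / (n + 1)) ^ (1 - α : ℝ)) atTop (nhds 1) := by
    have h1 : Tendsto (fun n : ℕ => (n : ℝ) / (n + 1)) atTop (nhds 1) :=
      tendsto_natCast_div_add_atTop 1
    have := h1.rpow_const (Or.inr h1α.le)
    simpa using this
  have hC : Tendsto (fun n : ℕ => ((n : ℝ) + 1) / (1 - α + n)) atTop (nhds 1) := by
    have hd : Tendsto (fun n : ℕ => (1 - α + (n : ℝ))) atTop atTop :=
      tendsto_atTop_add_const_left _ _ tendsto_natCast_atTop_atTop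
    have hinv : Tendsto (fun n : ℕ => (1 - α + (n : ℝ))⁻¹) atTop (nhds 0) :=
      hd.inv_tendsto_atTop
    have heq : (fun n : ℕ => ((n : ℝ) + 1) / (1 - α + n)) =ᶠ[atTop]
        (fun n : ℕ => 1 + α * (1 - α + n)⁻¹) := by
      filter_upwards [eventually_ge_atTop 1] with n hn
      have hN : (0 : ℝ) < n := by exact_mod_cast hn
      have : (1 - α + (n : ℝ)) ≠ 0 := by positivity
      field_simp
      ring
    have : Tendsto (fun n : ℕ => 1 + α * (1 - α + (n : ℝ))⁻¹) atTop (nhds 1) := by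
      have := tendsto_const_nhds (x := (1 : ℝ)) (f := atTop (α := ℕ)) |>.add
        (hinv.const_mul α)
      simpa using this
    exact Tendsto.congr' heq.symm this
  have : Tendsto g atTop (nhds 1) := by
    have := hA.mul (hB.mul hC)
    simpa using this
  exact this.congr' hev.symm
end

section
/- Let σ_α(n) = Z_1 + ... + Z_n be a random walk with i.i.d. Sibuya(α) jumps (σ_α(0) = 0). Then for every t ∈ ℕ_0, the expected number of indices x ≥ 0 with σ_α(x) = t equals binom(α+t-1, t); equivalently, ∑_{x=0}^∞ P(σ_α(x) = t) = (-1)^t binom(-α, t). -/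
/-!
The law of `σ_α(x)` has generating series `P ^ x`, where
`P(s) = ∑ₖ sibuya α k sᵏ = 1 - (1 - s) ^ α`. As `P` has no constant term, only `x ≤ t`
contribute to the coefficient of `sᵗ`, so the potential measure of `t` is the `t`-th
coefficient of `∑ₓ Pˣ = (1 - P)⁻¹ = (1 - s) ^ (-α)`, namely
`(-1) ^ t binom(-α, t) = binom(α + t - 1, t)`.
-/

open MeasureTheory ProbabilityTheory

open Finset PowerSeries

lemma gbinom_eq_choose (x : ℝ) (k : ℕ) : gbinom x k = Ring.choose x k := by
  rw [Ring.choose_eq_smul, ← Polynomial.aeval_eq_smeval, Polynomial.aeval_def,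
    Polynomial.eval₂_eq_eval_map, descPochhammer_map, descPochhammer_eval_eq_prod_range,
    gbinom, smul_eq_mul, inv_mul_eq_div]

lemma gbinom_add_sub_one_eq (α : ℝ) (t : ℕ) :
    gbinom (α + t - 1) t = (-1) ^ t * gbinom (-α) t := by
  rw [gbinom_eq_choose, gbinom_eq_choose, Ring.choose_neg, Units.smul_def, zsmul_eq_mul,
    Int.cast_negOnePow_natCast, ← mul_assoc, ← mul_pow, neg_one_mul, neg_neg, one_pow, one_mul]

lemma coeff_pow_eq_zero_of_lt {R : Type*} [CommRing R] {P : R⟦X⟧} (hP : constantCoeff P = 0)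
    {n t : ℕ} (h : t < n) : coeff t (P ^ n) = 0 :=
  X_pow_dvd_iff.mp (pow_dvd_pow_of_dvd (X_dvd_iff.mpr hP) n) t h

lemma coeff_geom_sum_eq_of_mul_eq_one {R : Type*} [CommRing R] {P U : R⟦X⟧}
    (hP : constantCoeff P = 0) (hU : (1 - P) * U = 1) {n t : ℕ} (h : t < n) :
    coeff t (∑ x ∈ range n, P ^ x) = coeff t U := by
  have : ∑ x ∈ range n, P ^ x = U - U * P ^ n := by
    rw [← mul_one_sub, ← mul_neg_geom_sum, ← mul_assoc, mul_comm U, hU, one_mul]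
  rw [this, map_sub, sub_eq_self, mul_comm]
  exact X_pow_dvd_iff.mp (dvd_mul_of_dvd_left (pow_dvd_pow_of_dvd (X_dvd_iff.mpr hP) n) U) t h

lemma one_sub_mk_sibuya (α : ℝ) :
    1 - mk (sibuya α) = rescale (-1) (binomialSeries ℝ α) := by
  ext k
  rcases k with _ | k
  · simp [sibuya]
  · simp [sibuya, gbinom_eq_choose, pow_succ]

lemma IndepFun.measureReal_add_eq_sum_antidiagonal {Ω : Type*} [MeasurableSpace Ω]
    {μ : Measure Ω} [IsFiniteMeasure μ] {X Y : Ω → ℕ} (hX : Measurable X) (hY : Measurable Y)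
    (hXY : IndepFun X Y μ) (n : ℕ) :
    μ.real {ω | X ω + Y ω = n} =
      ∑ p ∈ antidiagonal n, μ.real {ω | X ω = p.1} * μ.real {ω | Y ω = p.2} := by
  have hunion :
      {ω | X ω + Y ω = n} = ⋃ p ∈ antidiagonal n, X ⁻¹' {p.1} ∩ Y ⁻¹' {p.2} := by
    ext ω; simp
  have hdisj : (antidiagonal n : Set (ℕ × ℕ)).PairwiseDisjoint
      fun p => X ⁻¹' {p.1} ∩ Y ⁻¹' {p.2} := by
    intro p hp q hq hpq
    refine Set.disjoint_left.mpr fun ω hωp hωq => hpq ?_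
    simp_all [Prod.ext_iff]
  rw [hunion, measureReal_biUnion_finset hdisj
    fun p _ => (hX (measurableSet_singleton _)).inter (hY (measurableSet_singleton _))]
  refine sum_congr rfl fun p _ => ?_
  simp only [measureReal_def, hXY.measure_inter_preimage_eq_mul _ _ (measurableSet_singleton _)
    (measurableSet_singleton _), ENNReal.toReal_mul]
  rfl

lemma iIndepFun.measureReal_sum_range_eq_coeff_pow {Ω : Type*} [MeasurableSpace Ω]
    {μ : Measure Ω} [IsProbabilityMeasure μ] {Z : ℕ → Ω → ℕ} (hmeas : ∀ i, Measurable (Z i))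
    (hindep : iIndepFun Z μ) {p : ℕ → ℝ} (hlaw : ∀ i k, μ.real {ω | Z i ω = k} = p k)
    (n u : ℕ) : μ.real {ω | ∑ j ∈ range n, Z j ω = u} = coeff u (mk p ^ n) := by
  induction n generalizing u with
  | zero => by_cases hu : u = 0 <;> simp [hu, coeff_one, eq_comm]
  | succ n ih =>
    have hsum := hindep.indepFun_finsetSum_of_notMem hmeas (notMem_range_self (n := n))
    have hlaw_sum := IndepFun.measureReal_add_eq_sum_antidiagonal (by fun_prop) (hmeas n) hsum u
    simp only [Finset.sum_apply] at hlaw_sum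
    simp only [sum_range_succ, hlaw_sum, ih, hlaw, pow_succ, coeff_mul, coeff_mk]

theorem sibuya_walk_potential_measure_general
    {Ω : Type*} [MeasurableSpace Ω] (μ : Measure Ω) [IsProbabilityMeasure μ]
    (α : ℝ)
    (Z : ℕ → Ω → ℕ) (hmeas : ∀ i, Measurable (Z i))
    (hindep : iIndepFun Z μ)
    (hlaw : ∀ i k, (μ {ω | Z i ω = k}).toReal = sibuya α k)
    (S : ℕ → Ω → ℕ) (hS : ∀ n ω, S n ω = ∑ j ∈ Finset.range n, Z j ω)
    (t : ℕ) :
    (∑' x : ℕ, (μ {ω | S x ω = t}).toReal) = (-1 : ℝ) ^ t * gbinom (-α) t ∧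
    (∑' x : ℕ, (μ {ω | S x ω = t}).toReal) = gbinom (α + t - 1) t := by
  obtain rfl : S = fun n ω => ∑ j ∈ range n, Z j ω := funext fun n => funext (hS n)
  have hP : constantCoeff (mk (sibuya α)) = 0 := by simp [sibuya]
  have hU : (1 - mk (sibuya α)) * rescale (-1) (binomialSeries ℝ (-α)) = 1 := by
    rw [one_sub_mk_sibuya, ← map_mul, ← binomialSeries_add, add_neg_cancel, binomialSeries_zero,
      map_one]
  have hpotential :
      ∑' x, (μ {ω | ∑ j ∈ range x, Z j ω = t}).toReal = (-1) ^ t * gbinom (-α) t := by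
    simp only [← measureReal_def, iIndepFun.measureReal_sum_range_eq_coeff_pow hmeas hindep hlaw]
    rw [tsum_eq_sum (s := range (t + 1)) fun x hx =>
        coeff_pow_eq_zero_of_lt hP (by simpa [Nat.lt_succ_iff] using hx),
      ← map_sum, coeff_geom_sum_eq_of_mul_eq_one hP hU (lt_add_one t), coeff_rescale,
      binomialSeries_coeff, gbinom_eq_choose, smul_eq_mul, mul_one]
  exact ⟨hpotential, hpotential.trans (gbinom_add_sub_one_eq α t).symm⟩

/-- For the random walk `σ_α(n) = Z 1 + ⋯ + Z n` with i.i.d. Sibuya(α) jumps,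
the expected number of indices `x` with `σ_α(x) = t` equals
`∑_{x=0}^∞ P(σ_α(x) = t) = (-1)^t binom(-α, t) = binom(α+t-1, t)` for every `t ∈ ℕ`. -/
theorem sibuya_walk_potential_measure
    {Ω : Type*} [MeasurableSpace Ω] (μ : Measure Ω) [IsProbabilityMeasure μ]
    (α : ℝ) (hα : α ∈ Set.Ioo (0 : ℝ) 1)
    (Z : ℕ → Ω → ℕ) (hmeas : ∀ i, Measurable (Z i))
    (hindep : iIndepFun Z μ)
    (hlaw : ∀ i k, (μ {ω | Z i ω = k}).toReal = sibuya α k)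
    (S : ℕ → Ω → ℕ) (hS : ∀ n ω, S n ω = ∑ j ∈ Finset.range n, Z j ω)
    (t : ℕ) :
    (∑' x : ℕ, (μ {ω | S x ω = t}).toReal) = (-1 : ℝ) ^ t * gbinom (-α) t ∧
    (∑' x : ℕ, (μ {ω | S x ω = t}).toReal) = gbinom (α + t - 1) t :=
  sibuya_walk_potential_measure_general μ α Z hmeas hindep hlaw S hS t
end
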